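/- Let {φ_ℓ}_{ℓ=1}^p be an orthonormal family in a complex Hilbert space H, and let ψ_1,…,ψ_q ∈ H satisfy the Riesz-type bounds r₁‖b‖₂² ≤ ‖Σ_{k=1}^q b_k ψ_k‖² ≤ r₂‖b‖₂² for all b ∈ ℂ^q, where 0 < r₁ ≤ r₂. Let G := span{φ_1,…,φ_p}, F := span{ψ_1,…,ψ_q}, and let A ∈ ℂ^{q×p} have entries A_{kℓ} = ⟨φ_ℓ, ψ_k⟩, with σ_min(A) := √(λ_min(AᴴA)). Then √r₁ · cos∠(G,F) ≤ σ_min(A) ≤ √r₂ · cos∠(G,F); in particular, if cos∠(G,F) > 0 then 1/cos∠(G,F) ≤ √r₂ / σ_min(A) ≤ √(r₂/r₁) · (1/cos∠(G,F)). -/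

import Mathlib

/-!
Both sides are infima over the unit sphere of `ℂᵖ`. Since `x ↦ ∑ xₗ φₗ` is an isometry of `ℂᵖ`
onto `G`, `cos∠(G,F) = inf_{‖x‖=1} ‖Q_F (∑ xₗ φₗ)‖`, and by the Rayleigh principle
`σ_min(A) = inf_{‖x‖=1} ‖A x‖`. As `ψₖ ∈ F`, `(A x)ₖ = ⟨ψₖ, Q_F (∑ xₗ φₗ)⟩`, and the Riesz bounds
of `ψ` yield the frame bounds `r₁ ‖f‖² ≤ ∑ₖ |⟨ψₖ, f⟩|² ≤ r₂ ‖f‖²` for `f ∈ F`. So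
`√r₁ ‖Q_F (∑ xₗ φₗ)‖ ≤ ‖A x‖ ≤ √r₂ ‖Q_F (∑ xₗ φₗ)‖` pointwise, and one takes infima.
-/

/-- `cos∠(A,B) := inf{‖Q_B a‖ : a ∈ A, ‖a‖ = 1}`. -/
noncomputable def cosAngle {H : Type*} [NormedAddCommGroup H] [InnerProductSpace ℂ H]
    (A B : Submodule ℂ H) [CompleteSpace B] : ℝ :=
  sInf ((fun a => ‖(Submodule.orthogonalProjection B a : H)‖) '' {a : H | a ∈ A ∧ ‖a‖ = 1})

/-- The minimal eigenvalue of a (Hermitian) complex matrix: the smallest real number in its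
spectrum. -/
noncomputable def lambdaMin {n : Type*} [Fintype n] [DecidableEq n] (M : Matrix n n ℂ) : ℝ :=
  sInf {r : ℝ | (r : ℂ) ∈ spectrum ℂ M}

/-- The minimal singular value `σ_min(A) := √(λ_min(AᴴA))`. -/
noncomputable def sigmaMin {q p : ℕ} (A : Matrix (Fin q) (Fin p) ℂ) : ℝ :=
  Real.sqrt (lambdaMin (A.conjTranspose * A))

open Matrix Metric

section Rayleigh

variable {ι 𝕜 E : Type*} [Fintype ι] [RCLike 𝕜] [NormedAddCommGroup E] [InnerProductSpace 𝕜 E]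

theorem OrthonormalBasis.re_inner_self_apply_eq_sum (b : OrthonormalBasis ι 𝕜 E)
    {T : E →ₗ[𝕜] E} {μ : ι → ℝ} (hT : ∀ i, T (b i) = (μ i : 𝕜) • b i) (x : E) :
    RCLike.re (inner 𝕜 x (T x)) = ∑ i, μ i * ‖b.repr x i‖ ^ 2 := by
  have hTx : T x = ∑ i, (μ i * b.repr x i) • b i := by
    conv_lhs => rw [← b.sum_repr x]
    simp [map_sum, hT, smul_smul, mul_comm]
  rw [hTx, inner_sum, map_sum]
  refine Finset.sum_congr rfl fun i _ => ?_
  rw [inner_smul_right, b.repr_apply_apply, ← inner_conj_symm x, mul_assoc, RCLike.mul_conj]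
  norm_cast

theorem OrthonormalBasis.iInf_mul_norm_sq_le_re_inner_self_apply (b : OrthonormalBasis ι 𝕜 E)
    {T : E →ₗ[𝕜] E} {μ : ι → ℝ} (hT : ∀ i, T (b i) = (μ i : 𝕜) • b i) (x : E) :
    (⨅ i, μ i) * ‖x‖ ^ 2 ≤ RCLike.re (inner 𝕜 x (T x)) := by
  rw [b.re_inner_self_apply_eq_sum hT, ← b.sum_sq_norm_inner_right, Finset.mul_sum]
  exact Finset.sum_le_sum fun i _ => by
    rw [b.repr_apply_apply]
    exact mul_le_mul_of_nonneg_right (ciInf_le (Finite.bddBelow_range μ) i) (sq_nonneg _)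

end Rayleigh

namespace Matrix.IsHermitian

variable {n : Type*} [Fintype n] [DecidableEq n] {M : Matrix n n ℂ}

theorem lambdaMin_eq_iInf_eigenvalues (hM : M.IsHermitian) :
    lambdaMin M = ⨅ i, hM.eigenvalues i := by
  have : {r : ℝ | (r : ℂ) ∈ spectrum ℂ M} = spectrum ℝ M := by
    ext r; exact spectrum.algebraMap_mem_iff ℂ (r := r) (a := M)
  rw [lambdaMin, this, hM.spectrum_real_eq_range_eigenvalues]
  rfl

theorem lambdaMin_eq_iInf_re_inner [Nonempty n] (hM : M.IsHermitian) :
    lambdaMin M = ⨅ x : sphere (0 : EuclideanSpace ℂ n) 1,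
      RCLike.re (inner ℂ (x : EuclideanSpace ℂ n) (toEuclideanLin M x)) := by
  have hb : ∀ i, toEuclideanLin M (hM.eigenvectorBasis i) =
      (hM.eigenvalues i : ℂ) • hM.eigenvectorBasis i := fun i => by
    rw [toLpLin_apply, hM.mulVec_eigenvectorBasis]
    rfl
  have hlow : ∀ x : sphere (0 : EuclideanSpace ℂ n) 1, ⨅ i, hM.eigenvalues i ≤
      RCLike.re (inner ℂ (x : EuclideanSpace ℂ n) (toEuclideanLin M x)) := fun x => by
    have h := hM.eigenvectorBasis.iInf_mul_norm_sq_le_re_inner_self_apply hb x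
    rwa [mem_sphere_zero_iff_norm.mp x.2, one_pow, mul_one] at h
  obtain ⟨i, hi⟩ := exists_eq_ciInf_of_finite (f := hM.eigenvalues)
  have hbi : hM.eigenvectorBasis i ∈ sphere (0 : EuclideanSpace ℂ n) 1 := by simp
  have : Nonempty (sphere (0 : EuclideanSpace ℂ n) 1) := ⟨⟨_, hbi⟩⟩
  rw [lambdaMin_eq_iInf_eigenvalues hM]
  refine le_antisymm (le_ciInf hlow) (ciInf_le_of_le ⟨_, Set.forall_mem_range.2 hlow⟩ ⟨_, hbi⟩ ?_)
  simp [hb, ← hi]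

end Matrix.IsHermitian

theorem re_inner_conjTranspose_mul_self_apply {m n : Type*} [Fintype m] [DecidableEq m]
    [Fintype n] [DecidableEq n] (A : Matrix m n ℂ) (x : EuclideanSpace ℂ n) :
    RCLike.re (inner ℂ x (toEuclideanLin (Aᴴ * A) x)) = ‖toEuclideanLin A x‖ ^ 2 := by
  rw [toLpLin_mul_same, LinearMap.comp_apply, toEuclideanLin_conjTranspose_eq_adjoint,
    LinearMap.adjoint_inner_right, inner_self_eq_norm_sq]

theorem sigmaMin_eq_iInf_norm {q p : ℕ} (A : Matrix (Fin q) (Fin p) ℂ) :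
    sigmaMin A = ⨅ x : sphere (0 : EuclideanSpace ℂ (Fin p)) 1, ‖toEuclideanLin A x‖ := by
  have hM := isHermitian_conjTranspose_mul_self A
  rcases isEmpty_or_nonempty (Fin p) with hp | hp
  · have : IsEmpty (sphere (0 : EuclideanSpace ℂ (Fin p)) 1) :=
      ⟨fun x => by simpa [Subsingleton.elim (x : EuclideanSpace ℂ (Fin p)) 0] using x.2⟩
    rw [sigmaMin, hM.lambdaMin_eq_iInf_eigenvalues, Real.iInf_of_isEmpty, Real.iInf_of_isEmpty,
      Real.sqrt_zero]
  · have : Nonempty (sphere (0 : EuclideanSpace ℂ (Fin p)) 1) :=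
      (NormedSpace.sphere_nonempty.2 zero_le_one).to_subtype
    simp_rw [sigmaMin, hM.lambdaMin_eq_iInf_re_inner, re_inner_conjTranspose_mul_self_apply]
    rw [Monotone.map_ciInf_of_continuousAt Real.continuous_sqrt.continuousAt Real.sqrt_monotone
      ⟨0, Set.forall_mem_range.2 fun x => sq_nonneg _⟩]
    simp_rw [Real.sqrt_sq (norm_nonneg _)]

section Frame

variable {ι 𝕜 E : Type*} [Fintype ι] [RCLike 𝕜] [NormedAddCommGroup E] [InnerProductSpace 𝕜 E]

theorem re_inner_sum_smul_le (ψ : ι → E) (c : ι → 𝕜) (f : E) :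
    RCLike.re (inner 𝕜 (∑ k, c k • ψ k) f) ≤ ∑ k, ‖c k‖ * ‖inner 𝕜 (ψ k) f‖ := by
  rw [sum_inner, map_sum]
  refine Finset.sum_le_sum fun k _ => ?_
  rw [inner_smul_left, ← RCLike.norm_conj (c k), ← norm_mul]
  exact RCLike.re_le_norm _

theorem re_inner_sum_inner_smul (ψ : ι → E) (f : E) :
    RCLike.re (inner 𝕜 (∑ k, inner 𝕜 (ψ k) f • ψ k) f) = ∑ k, ‖inner 𝕜 (ψ k) f‖ ^ 2 := by
  simp only [sum_inner, map_sum, inner_smul_left, RCLike.conj_mul]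
  norm_cast

theorem sum_norm_inner_sq_le {ψ : ι → E} {r : ℝ} (hr : 0 ≤ r)
    (hψ : ∀ b : ι → 𝕜, ‖∑ k, b k • ψ k‖ ^ 2 ≤ r * ∑ k, ‖b k‖ ^ 2) (f : E) :
    ∑ k, ‖inner 𝕜 (ψ k) f‖ ^ 2 ≤ r * ‖f‖ ^ 2 := by
  have hS := re_inner_sum_inner_smul (𝕜 := 𝕜) ψ f
  set g := ∑ k, inner 𝕜 (ψ k) f • ψ k
  set S := ∑ k, ‖inner 𝕜 (ψ k) f‖ ^ 2
  replace hS : S ≤ ‖g‖ * ‖f‖ := by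
    rw [← hS]
    exact (RCLike.re_le_norm _).trans (norm_inner_le_norm _ _)
  rcases (show 0 ≤ S by positivity).eq_or_lt with hS0 | hS0
  · rw [← hS0]; positivity
  refine le_of_mul_le_mul_right ?_ hS0
  calc S * S ≤ ‖g‖ ^ 2 * ‖f‖ ^ 2 := by nlinarith
    _ ≤ r * S * ‖f‖ ^ 2 := by gcongr; exact hψ _
    _ = r * ‖f‖ ^ 2 * S := by ring

theorem le_sum_norm_inner_sq {ψ : ι → E} {r : ℝ} (hr : 0 ≤ r)
    (hψ : ∀ b : ι → 𝕜, r * ∑ k, ‖b k‖ ^ 2 ≤ ‖∑ k, b k • ψ k‖ ^ 2) {f : E}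
    (hf : f ∈ Submodule.span 𝕜 (Set.range ψ)) :
    r * ‖f‖ ^ 2 ≤ ∑ k, ‖inner 𝕜 (ψ k) f‖ ^ 2 := by
  obtain ⟨c, rfl⟩ := (Submodule.mem_span_range_iff_exists_fun 𝕜).1 hf
  set f := ∑ k, c k • ψ k
  set S := ∑ k, ‖inner 𝕜 (ψ k) f‖ ^ 2
  have hf : ‖f‖ ^ 2 ≤ ∑ k, ‖c k‖ * ‖inner 𝕜 (ψ k) f‖ := by
    rw [← inner_self_eq_norm_sq (𝕜 := 𝕜)]
    exact re_inner_sum_smul_le ψ c f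
  have hCS := Finset.sum_mul_sq_le_sq_mul_sq Finset.univ (fun k => ‖c k‖)
    (fun k => ‖inner 𝕜 (ψ k) f‖)
  rcases (show 0 ≤ ‖f‖ ^ 2 by positivity).eq_or_lt with hf0 | hf0
  · rw [← hf0, mul_zero]; positivity
  refine le_of_mul_le_mul_left ?_ hf0
  calc ‖f‖ ^ 2 * (r * ‖f‖ ^ 2) = r * (‖f‖ ^ 2 * ‖f‖ ^ 2) := by ring
    _ ≤ r * ((∑ k, ‖c k‖ ^ 2) * S) := mul_le_mul_of_nonneg_left (by nlinarith) hr
    _ = (r * ∑ k, ‖c k‖ ^ 2) * S := by ring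
    _ ≤ ‖f‖ ^ 2 * S := by gcongr; exact hψ c

end Frame

section Synthesis

variable {ι κ 𝕜 E : Type*} [Fintype ι] [RCLike 𝕜] [NormedAddCommGroup E] [InnerProductSpace 𝕜 E]

theorem Orthonormal.norm_sum_smul {φ : ι → E} (hφ : Orthonormal 𝕜 φ) (x : EuclideanSpace 𝕜 ι) :
    ‖∑ l, x l • φ l‖ = ‖x‖ := by
  refine (sq_eq_sq₀ (norm_nonneg _) (norm_nonneg _)).1 ?_
  rw [EuclideanSpace.norm_sq_eq, ← inner_self_eq_norm_sq (𝕜 := 𝕜), hφ.inner_sum, map_sum]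
  simp only [RCLike.conj_mul]
  norm_cast

theorem toEuclideanLin_apply_eq_inner_sum [DecidableEq ι] [Fintype κ] {A : Matrix κ ι 𝕜}
    {ψ : κ → E} {φ : ι → E} (hA : ∀ k l, A k l = inner 𝕜 (ψ k) (φ l))
    (x : EuclideanSpace 𝕜 ι) (k : κ) :
    toEuclideanLin A x k = inner 𝕜 (ψ k) (∑ l, x l • φ l) := by
  simp [toLpLin_apply, mulVec, dotProduct, inner_sum, inner_smul_right, hA, mul_comm]

theorem cosAngle_span_eq_iInf {H : Type*} [NormedAddCommGroup H] [InnerProductSpace ℂ H]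
    {φ : ι → H} (hφ : Orthonormal ℂ φ) (F : Submodule ℂ H) [CompleteSpace F] :
    cosAngle (Submodule.span ℂ (Set.range φ)) F =
      ⨅ x : sphere (0 : EuclideanSpace ℂ ι) 1, ‖F.starProjection (∑ l, x.1 l • φ l)‖ := by
  have : {a : H | a ∈ Submodule.span ℂ (Set.range φ) ∧ ‖a‖ = 1} =
      (fun x : EuclideanSpace ℂ ι => ∑ l, x l • φ l) '' sphere 0 1 := by
    ext a
    simp only [Set.mem_ofPred_eq, Submodule.mem_span_range_iff_exists_fun, Set.mem_image,
      mem_sphere_zero_iff_norm]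
    constructor
    · rintro ⟨⟨c, rfl⟩, ha⟩
      exact ⟨WithLp.toLp 2 c, by rwa [← hφ.norm_sum_smul], rfl⟩
    · rintro ⟨x, hx, rfl⟩
      exact ⟨⟨x, rfl⟩, by rwa [hφ.norm_sum_smul]⟩
  rw [cosAngle, this, ← Set.image_comp, sInf_image']
  rfl

theorem norm_toEuclideanLin_sq_eq_sum [DecidableEq ι] [Fintype κ] {A : Matrix κ ι 𝕜}
    {ψ : κ → E} {φ : ι → E} (hA : ∀ k l, A k l = inner 𝕜 (ψ k) (φ l))
    {F : Submodule 𝕜 E} [F.HasOrthogonalProjection] (hψ : ∀ k, ψ k ∈ F) (x : EuclideanSpace 𝕜 ι) :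
    ‖toEuclideanLin A x‖ ^ 2 = ∑ k, ‖inner 𝕜 (ψ k) (F.starProjection (∑ l, x l • φ l))‖ ^ 2 := by
  simp_rw [EuclideanSpace.norm_sq_eq, toEuclideanLin_apply_eq_inner_sum hA,
    ← Submodule.inner_starProjection_left_eq_right, (Submodule.starProjection_eq_self_iff).2 (hψ _)]

end Synthesis

theorem stmt_2_general {H : Type*} [NormedAddCommGroup H] [InnerProductSpace ℂ H]
    {q p : ℕ} (ψ : Fin q → H) (φ : Fin p → H) (hφ : Orthonormal ℂ φ)
    (r₁ r₂ : ℝ) (hr₁ : 0 < r₁) (hr₁₂ : r₁ ≤ r₂)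
    (hriesz : ∀ b : Fin q → ℂ,
      r₁ * ∑ k, ‖b k‖ ^ 2 ≤ ‖∑ k, b k • ψ k‖ ^ 2 ∧
        ‖∑ k, b k • ψ k‖ ^ 2 ≤ r₂ * ∑ k, ‖b k‖ ^ 2)
    (G F : Submodule ℂ H) [CompleteSpace F]
    (hG : G = Submodule.span ℂ (Set.range φ)) (hF : F = Submodule.span ℂ (Set.range ψ))
    (A : Matrix (Fin q) (Fin p) ℂ) (hA : ∀ k l, A k l = inner ℂ (ψ k) (φ l)) :
    Real.sqrt r₁ * cosAngle G F ≤ sigmaMin A ∧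
    sigmaMin A ≤ Real.sqrt r₂ * cosAngle G F ∧
    (0 < cosAngle G F →
      1 / cosAngle G F ≤ Real.sqrt r₂ / sigmaMin A ∧
      Real.sqrt r₂ / sigmaMin A ≤ Real.sqrt (r₂ / r₁) * (1 / cosAngle G F)) := by
  have hr₂ : 0 ≤ r₂ := hr₁.le.trans hr₁₂
  set S := sphere (0 : EuclideanSpace ℂ (Fin p)) 1
  set g : S → H := fun x => F.starProjection (∑ l, x.1 l • φ l)
  have hψF (k) : ψ k ∈ F := hF ▸ Submodule.subset_span (Set.mem_range_self k)
  have hAx (x : S) : ‖toEuclideanLin A x‖ ^ 2 = ∑ k, ‖inner ℂ (ψ k) (g x)‖ ^ 2 :=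
    norm_toEuclideanLin_sq_eq_sum hA hψF x
  have hlow (x : S) : √r₁ * ‖g x‖ ≤ ‖toEuclideanLin A x‖ := by
    refine (pow_le_pow_iff_left₀ (by positivity) (norm_nonneg _) two_ne_zero).1 ?_
    rw [mul_pow, Real.sq_sqrt hr₁.le, hAx]
    exact le_sum_norm_inner_sq hr₁.le (fun b => (hriesz b).1) (hF ▸ F.starProjection_apply_mem _)
  have hup (x : S) : ‖toEuclideanLin A x‖ ≤ √r₂ * ‖g x‖ := by
    refine (pow_le_pow_iff_left₀ (norm_nonneg _) (by positivity) two_ne_zero).1 ?_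
    rw [mul_pow, Real.sq_sqrt hr₂, hAx]
    exact sum_norm_inner_sq_le hr₂ (fun b => (hriesz b).2) _
  have hcos : cosAngle G F = ⨅ x : S, ‖g x‖ := hG ▸ cosAngle_span_eq_iInf hφ F
  have hσ : sigmaMin A = ⨅ x : S, ‖toEuclideanLin A x‖ := sigmaMin_eq_iInf_norm A
  have h₁ : √r₁ * cosAngle G F ≤ sigmaMin A := by
    rw [hcos, hσ, Real.mul_iInf_of_nonneg (Real.sqrt_nonneg _)]
    exact ciInf_mono ⟨0, Set.forall_mem_range.2 fun x => by positivity⟩ hlow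
  have h₂ : sigmaMin A ≤ √r₂ * cosAngle G F := by
    rw [hcos, hσ, Real.mul_iInf_of_nonneg (Real.sqrt_nonneg _)]
    exact ciInf_mono ⟨0, Set.forall_mem_range.2 fun x => by positivity⟩ hup
  refine ⟨h₁, h₂, fun hc => ⟨?_, ?_⟩⟩
  · have hσ₀ : 0 < sigmaMin A := (mul_pos (Real.sqrt_pos.2 hr₁) hc).trans_le h₁
    rwa [div_le_div_iff₀ hc hσ₀, one_mul]
  · rw [Real.sqrt_div hr₂, div_mul_div_comm, mul_one]
    gcongr

/-- `√r₁ cos∠(G,F) ≤ σ_min(A) ≤ √r₂ cos∠(G,F)`, and the induced bounds on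
`sec∠(G,F)`. -/
theorem stmt_2 {H : Type*} [NormedAddCommGroup H] [InnerProductSpace ℂ H] [CompleteSpace H]
    {q p : ℕ} (ψ : Fin q → H) (φ : Fin p → H) (hφ : Orthonormal ℂ φ)
    (r₁ r₂ : ℝ) (hr₁ : 0 < r₁) (hr₁₂ : r₁ ≤ r₂)
    (hriesz : ∀ b : Fin q → ℂ,
      r₁ * ∑ k, ‖b k‖ ^ 2 ≤ ‖∑ k, b k • ψ k‖ ^ 2 ∧
        ‖∑ k, b k • ψ k‖ ^ 2 ≤ r₂ * ∑ k, ‖b k‖ ^ 2)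
    (G F : Submodule ℂ H) [CompleteSpace G] [CompleteSpace F]
    (hG : G = Submodule.span ℂ (Set.range φ)) (hF : F = Submodule.span ℂ (Set.range ψ))
    (A : Matrix (Fin q) (Fin p) ℂ) (hA : ∀ k l, A k l = inner ℂ (ψ k) (φ l)) :
    Real.sqrt r₁ * cosAngle G F ≤ sigmaMin A ∧
    sigmaMin A ≤ Real.sqrt r₂ * cosAngle G F ∧
    (0 < cosAngle G F →
      1 / cosAngle G F ≤ Real.sqrt r₂ / sigmaMin A ∧
      Real.sqrt r₂ / sigmaMin A ≤ Real.sqrt (r₂ / r₁) * (1 / cosAngle G F)) :=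
  stmt_2_general ψ φ hφ r₁ r₂ hr₁ hr₁₂ hriesz G F hG hF A hA
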